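/- Let N ∈ ℕ and let F₂ : [-1, 1) → ℝ be a function that can be represented as F₂(x) = c₁(1-x)^{-1/2} + c₂(1-x)^{1/2} + F̃₂(x), where c₁ > 0, c₂ ∈ ℝ, and F̃₂ is continuously differentiable on [-1, 1]. Then the sequence of left Riemann sums |Σ_{k = -n}^{n-1} (1/n) F₂(k/n)| is bounded uniformly over n ≥ N. -/

import Mathlib

open Set

/-!
Bounding `|F₂|` termwise, the regular part `c₂ (1 - x) ^ (1/2) + F̃₂(x)` is bounded on `[-1, 1]`
and contributes `O(1)` to a Riemann sum over an interval of length 2. The singular part has the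
Riemann sum `n⁻¹ᐟ² ∑_{j=1}^{2n} j^(-1/2)`, and comparing `1/√j` with `2 (√j - √(j - 1))` telescopes
this to at most `n⁻¹ᐟ² · 2√(2n) = 2√2`.
-/

theorem one_div_sqrt_add_one_le {x : ℝ} (hx : 0 ≤ x) :
    1 / √(x + 1) ≤ 2 * (√(x + 1) - √x) := by
  have hpos : 0 < √(x + 1) := Real.sqrt_pos.2 (by linarith)
  have hsq : √(x + 1) ^ 2 = √x ^ 2 + 1 := by
    rw [Real.sq_sqrt (by linarith), Real.sq_sqrt hx]
  rw [div_le_iff₀ hpos]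
  nlinarith [sq_nonneg (√(x + 1) - √x)]

theorem sum_range_one_div_sqrt_succ_le (m : ℕ) :
    ∑ j ∈ Finset.range m, 1 / √((j : ℝ) + 1) ≤ 2 * √m := by
  induction m with
  | zero => simp
  | succ m ih =>
    rw [Finset.sum_range_succ, Nat.cast_succ]
    linarith [one_div_sqrt_add_one_le (Nat.cast_nonneg' m)]

theorem Int.sum_Icc_neg_eq_sum_range {M : Type*} [AddCommMonoid M] (n : ℕ) (f : ℤ → M) :
    ∑ k ∈ Finset.Icc (-(n : ℤ)) (n - 1), f k = ∑ j ∈ Finset.range (2 * n), f (n - 1 - j) := by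
  refine Finset.sum_nbij' (fun k => (n - 1 - k).toNat) (fun j => n - 1 - j) ?_ ?_ ?_ ?_ ?_ <;>
    intro a ha <;> simp only [Finset.mem_Icc, Finset.mem_range] at ha ⊢
  all_goals first | omega | congr 1; omega

noncomputable def leftRiemannSum (f : ℝ → ℝ) (n : ℕ) : ℝ :=
  ∑ k ∈ Finset.Icc (-(n : ℤ)) (n - 1), 1 / (n : ℝ) * f (k / n)

theorem div_mem_Ico_of_mem_Icc {n : ℕ} {k : ℤ} (hk : k ∈ Finset.Icc (-(n : ℤ)) (n - 1)) :
    (k : ℝ) / n ∈ Ico (-1) 1 := by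
  rw [Finset.mem_Icc] at hk
  have hn : (0 : ℝ) < n := by exact_mod_cast (show (0 : ℤ) < n by omega)
  have hk₁ : -(n : ℝ) ≤ k := by exact_mod_cast hk.1
  have hk₂ : (k : ℝ) + 1 ≤ n := by exact_mod_cast (show k + 1 ≤ n by omega)
  constructor
  · rw [le_div_iff₀ hn]; linarith
  · rw [div_lt_one hn]; linarith

theorem abs_leftRiemannSum_le {f g : ℝ → ℝ} (hfg : ∀ x ∈ Ico (-1 : ℝ) 1, |f x| ≤ g x) (n : ℕ) :
    |leftRiemannSum f n| ≤ leftRiemannSum g n := by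
  refine (Finset.abs_sum_le_sum_abs _ _).trans (Finset.sum_le_sum fun k hk => ?_)
  rw [abs_mul, abs_of_nonneg (by positivity)]
  exact mul_le_mul_of_nonneg_left (hfg _ (div_mem_Ico_of_mem_Icc hk)) (by positivity)

theorem leftRiemannSum_const_le {B : ℝ} (hB : 0 ≤ B) (n : ℕ) :
    leftRiemannSum (fun _ => B) n ≤ 2 * B := by
  have hcard : (Finset.Icc (-(n : ℤ)) (n - 1)).card = 2 * n := by
    rw [Int.card_Icc]; omega
  rw [leftRiemannSum, Finset.sum_const, hcard, nsmul_eq_mul, Nat.cast_mul, Nat.cast_two,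
    ← mul_assoc, mul_one_div, mul_div_assoc]
  exact mul_le_mul_of_nonneg_right (mul_le_of_le_one_right zero_le_two (div_self_le_one _)) hB

theorem leftRiemannSum_one_sub_rpow_neg_half_le (n : ℕ) :
    leftRiemannSum (fun x => (1 - x) ^ (-(1 : ℝ) / 2)) n ≤ 2 * √2 := by
  have hterm : ∀ j : ℕ, 1 / (n : ℝ) * (1 - ((n - 1 - j : ℤ) : ℝ) / n) ^ (-(1 : ℝ) / 2)
      = 1 / √n * (1 / √((j : ℝ) + 1)) := by
    intro j
    rcases Nat.eq_zero_or_pos n with rfl | hn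
    · simp
    have hn' : (0 : ℝ) < n := by exact_mod_cast hn
    have hsub : 1 - ((n - 1 - j : ℤ) : ℝ) / n = ((j : ℝ) + 1) / n := by
      push_cast; field_simp; ring
    rw [hsub, neg_div, Real.rpow_neg (by positivity), ← Real.sqrt_eq_rpow,
      Real.sqrt_div (by positivity), inv_div]
    field_simp
    rw [Real.sq_sqrt hn'.le]
  calc leftRiemannSum (fun x => (1 - x) ^ (-(1 : ℝ) / 2)) n
      = 1 / √n * ∑ j ∈ Finset.range (2 * n), 1 / √((j : ℝ) + 1) := by
        rw [leftRiemannSum, Int.sum_Icc_neg_eq_sum_range, Finset.mul_sum]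
        exact Finset.sum_congr rfl fun j _ => hterm j
    _ ≤ 1 / √n * (2 * √((2 * n : ℕ) : ℝ)) := by
        gcongr; exact sum_range_one_div_sqrt_succ_le _
    _ = 2 * √2 * (√n / √n) := by
        push_cast; rw [Real.sqrt_mul zero_le_two]; ring
    _ ≤ 2 * √2 := mul_le_of_le_one_right (by positivity) (div_self_le_one _)

theorem abs_le_of_inv_sqrt_decomposition {F Ft : ℝ → ℝ} {c₁ c₂ C : ℝ}
    (hC : ∀ x ∈ Icc (-1 : ℝ) 1, |Ft x| ≤ C)
    (hrep : ∀ x ∈ Ico (-1 : ℝ) 1,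
      F x = c₁ * (1 - x) ^ (-(1 : ℝ) / 2) + c₂ * (1 - x) ^ ((1 : ℝ) / 2) + Ft x) :
    ∀ x ∈ Ico (-1 : ℝ) 1, |F x| ≤ |c₁| * (1 - x) ^ (-(1 : ℝ) / 2) + (|c₂| * √2 + C) := by
  intro x hx
  have h1x : 0 ≤ 1 - x := by linarith [hx.2]
  have hsqrt : (1 - x) ^ ((1 : ℝ) / 2) ≤ √2 := by
    rw [← Real.sqrt_eq_rpow]; exact Real.sqrt_le_sqrt (by linarith [hx.1])
  have hFt := hC x (Ico_subset_Icc_self hx)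
  rw [hrep x hx]
  calc |c₁ * (1 - x) ^ (-(1 : ℝ) / 2) + c₂ * (1 - x) ^ ((1 : ℝ) / 2) + Ft x|
      ≤ |c₁| * (1 - x) ^ (-(1 : ℝ) / 2) + |c₂| * (1 - x) ^ ((1 : ℝ) / 2) + |Ft x| := by
        refine (abs_add_three _ _ _).trans_eq ?_
        rw [abs_mul, abs_mul, abs_of_nonneg (Real.rpow_nonneg h1x _),
          abs_of_nonneg (Real.rpow_nonneg h1x _)]
    _ ≤ |c₁| * (1 - x) ^ (-(1 : ℝ) / 2) + (|c₂| * √2 + C) := by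
        linarith [mul_le_mul_of_nonneg_left hsqrt (abs_nonneg c₂)]

theorem riemann_sums_inv_sqrt_bounded_general
    (N : ℕ) (F₂ Ft : ℝ → ℝ) (c₁ c₂ : ℝ)
    (hFt : ContDiffOn ℝ 1 Ft (Set.Icc (-1 : ℝ) 1))
    (hrep : ∀ x ∈ Set.Ico (-1 : ℝ) 1,
      F₂ x = c₁ * (1 - x) ^ (-(1 : ℝ)/2) + c₂ * (1 - x) ^ ((1 : ℝ)/2) + Ft x) :
    ∃ M : ℝ, ∀ n : ℕ, N ≤ n →
      |∑ k ∈ Finset.Icc (-(n : ℤ)) ((n : ℤ) - 1), (1/(n : ℝ)) * F₂ ((k : ℝ)/(n : ℝ))| ≤ M := by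
  obtain ⟨C, hC⟩ := isCompact_Icc.exists_bound_of_continuousOn hFt.continuousOn
  have hC₀ : 0 ≤ C := (abs_nonneg _).trans (hC 0 ⟨by norm_num, by norm_num⟩)
  refine ⟨|c₁| * (2 * √2) + 2 * (|c₂| * √2 + C), fun n _ => ?_⟩
  calc |leftRiemannSum F₂ n|
      ≤ leftRiemannSum (fun x => |c₁| * (1 - x) ^ (-(1 : ℝ) / 2) + (|c₂| * √2 + C)) n :=
        abs_leftRiemannSum_le (abs_le_of_inv_sqrt_decomposition hC hrep) n
    _ = |c₁| * leftRiemannSum (fun x => (1 - x) ^ (-(1 : ℝ) / 2)) n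
          + leftRiemannSum (fun _ => |c₂| * √2 + C) n := by
        simp only [leftRiemannSum, Finset.mul_sum, ← Finset.sum_add_distrib]
        exact Finset.sum_congr rfl fun _ _ => by ring
    _ ≤ |c₁| * (2 * √2) + 2 * (|c₂| * √2 + C) :=
        add_le_add (mul_le_mul_of_nonneg_left (leftRiemannSum_one_sub_rpow_neg_half_le n)
          (abs_nonneg _)) (leftRiemannSum_const_le (by positivity) n)

/-- Corollary of Proposition 2: if F₂(x) = c₁(1-x)^{-1/2} + c₂(1-x)^{1/2} + Ft(x)
on [-1,1) with c₁ > 0 and Ft ∈ C¹[-1,1], then the left Riemann sums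
|Σ_{k=-n}^{n-1} (1/n) F₂(k/n)| are bounded uniformly over n ≥ N. -/
theorem riemann_sums_inv_sqrt_bounded
    (N : ℕ) (hN : 0 < N) (F₂ Ft : ℝ → ℝ) (c₁ c₂ : ℝ) (hc₁ : 0 < c₁)
    (hFt : ContDiffOn ℝ 1 Ft (Set.Icc (-1 : ℝ) 1))
    (hrep : ∀ x ∈ Set.Ico (-1 : ℝ) 1,
      F₂ x = c₁ * (1 - x) ^ (-(1 : ℝ)/2) + c₂ * (1 - x) ^ ((1 : ℝ)/2) + Ft x) :
    ∃ M : ℝ, ∀ n : ℕ, N ≤ n →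
      |∑ k ∈ Finset.Icc (-(n : ℤ)) ((n : ℤ) - 1), (1/(n : ℝ)) * F₂ ((k : ℝ)/(n : ℝ))| ≤ M :=
  riemann_sums_inv_sqrt_bounded_general N F₂ Ft c₁ c₂ hFt hrep
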